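/- arXiv:1608.01765 — 4 statements merged into one kernel-verified Lean document; each statement's English description precedes it below -/
import Mathlib

section
/- Let p be an odd prime, n a positive integer, and i, h nonnegative integers. In the ring of formal power series ℚ⟦q⟧ one has Π_{M≥1} (1−q^M)^{n(i+2h)} · (1−q^{4M})^{n(2i+h)} · (1−q^{pM})^{n(i+2h)} · (1−q^{4pM})^{n(2i+h)} = (Π_{M≥1} (1−q^{2M})^{3n(i+h)} · (1−q^{2pM})^{3n(i+h)}) · (Σ_{l≥0} b_l(i+2h, i) · q^l). (This is the power-series content of Lemma 1: X^i Y^h = 2^{ni} q^{mi} Σ_{l≥0} b_l(i+2h, i) q^l.) -/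
open Finset

/-- σ₁, the sum-of-divisors function. -/
def sigma1 (k : ℕ) : ℕ := ∑ d ∈ k.divisors, d

/-- The term σ₁(k/d)/(k/d), taken to be 0 unless d divides k. -/
noncomputable def sigmaTerm (k d : ℕ) : ℚ :=
  if d ∣ k then (sigma1 (k / d) : ℚ) / (k / d) else 0

/-- α_p(k) = σ₁(k)/k − 3σ₁(k/2)/(k/2) + 2σ₁(k/4)/(k/4) + σ₁(k/p)/(k/p)
      − 3σ₁(k/(2p))/(k/(2p)) + 2σ₁(k/(4p))/(k/(4p)). -/
noncomputable def alphaP (p k : ℕ) : ℚ :=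
  sigmaTerm k 1 - 3 * sigmaTerm k 2 + 2 * sigmaTerm k 4
    + sigmaTerm k p - 3 * sigmaTerm k (2 * p) + 2 * sigmaTerm k (4 * p)

/-- The multiplicity j_k of the part k in the partition J. -/
def mult {N : ℕ} (J : N.Partition) (k : ℕ) : ℕ := Multiset.count k J.parts

/-- |J| = Σ_k j_k. -/
def normJ {N : ℕ} (J : N.Partition) : ℕ := Multiset.card J.parts

/-- J_o = Σ_{k odd} j_k. -/
def oddJ {N : ℕ} (J : N.Partition) : ℕ := Multiset.card (J.parts.filter Odd)

/-- J_e = Σ_{k even} j_k. -/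
def evenJ {N : ℕ} (J : N.Partition) : ℕ := Multiset.card (J.parts.filter Even)

/-- W_p(J) = Π_{k≥1} α_p(k)^{j_k}/j_k!  (the factors with j_k = 0 are 1). -/
noncomputable def Wp (p : ℕ) {N : ℕ} (J : N.Partition) : ℚ :=
  ∏ k ∈ J.parts.toFinset, alphaP p k ^ mult J k / (Nat.factorial (mult J k))

/-- b_l(u,v) = Σ_{J ∈ J[l]} (−n)^{|J|} u^{J_o} v^{J_e} W_p(J). -/
noncomputable def bP (p n l : ℕ) (u v : ℚ) : ℚ :=
  ∑ J : l.Partition, (-(n : ℚ)) ^ normJ J * u ^ oddJ J * v ^ evenJ J * Wp p J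

/-- The infinite product Π_{M≥1} f(M) of formal power series. Each factor below is
of the form f(M) = 1 + O(q^M), so for each fixed coefficient the finite partial
products stabilize: the coefficient of q^d of the infinite product is the
coefficient of q^d of Π_{M=1}^{d} f(M). -/
noncomputable def infProd (f : ℕ → PowerSeries ℚ) : PowerSeries ℚ :=
  PowerSeries.mk fun d => PowerSeries.coeff d (∏ M ∈ Finset.Icc 1 d, f M)

/-!
Every factor on both sides is `1 + O(q^M)`, so each coefficient of an infinite product is one of
a finite product. By the generating function of `Nat.Partition`, `Σ b_l q^l = Π_k exp (c_k q^k)`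
with `c_k = -n w_k α_p(k)`, where `w_k` is `i + 2h` for odd `k` and `i` for even `k`.
A series with constant term `1` is determined by its logarithmic derivative `q F'/F`, and
`q d/dq log (1 - q^b) = -b Σ_m q^{bm}`, so the `q^j`-coefficient of the logarithmic derivative of
`Π_M (1 - q^{bM})` is `-j σ₁(j/b)/(j/b)`. Comparing the two sides thus reduces to
`w_j α_p(j) = (i + 2h) T₁ + (2i + h) T₄ - 3(i + h) T₂`, where
`T_d = σ₁(j/d)/(j/d) + σ₁(j/dp)/(j/dp)`. For odd `j` this holds as `T₂ = T₄ = 0`; for even `j`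
it amounts to `2T₁ + T₄ = 3T₂`, which is the Hecke relation `σ₁(2m) + 2σ₁(m/2) = 3σ₁(m)` at
`m = j/2` and (as `p` is odd) at `m = j/2p`.
-/

open ArithmeticFunction in
/-- The Hecke relation for `σ₁` at a prime. -/
theorem sigma1_prime_mul {ℓ : ℕ} (hℓ : ℓ.Prime) (m : ℕ) :
    sigma1 (ℓ * m) + (if ℓ ∣ m then ℓ * sigma1 (m / ℓ) else 0)
      = (ℓ + 1) * sigma1 m := by
  rcases eq_or_ne m 0 with rfl | hm
  · simp [sigma1]
  obtain ⟨a, w, hw, rfl⟩ := Nat.exists_eq_pow_mul_and_not_dvd hm ℓ hℓ.ne_one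
  have hσ (b : ℕ) : sigma1 (ℓ ^ b * w) = (∑ i ∈ range (b + 1), ℓ ^ i) * sigma1 w := by
    simp only [sigma1, ← sigma_one_apply]
    rw [isMultiplicative_sigma.map_mul_of_coprime
      (((Nat.Prime.coprime_iff_not_dvd hℓ).mpr hw).pow_left b), sigma_one_apply_prime_pow hℓ]
  have hgeom (b : ℕ) :
      ∑ i ∈ range (b + 2), ℓ ^ i = 1 + ℓ * ∑ i ∈ range (b + 1), ℓ ^ i := by
    rw [sum_range_succ', mul_sum, add_comm]; simp [pow_succ, mul_comm]
  rw [← mul_assoc, ← pow_succ']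
  rcases a with _ | b
  · have : ¬ ℓ ∣ ℓ ^ 0 * w := by simpa using hw
    rw [if_neg this, hσ, hσ]; simp [add_comm]
  · have hdiv : ℓ ^ (b + 1) * w / ℓ = ℓ ^ b * w := by
      rw [pow_succ', mul_assoc, Nat.mul_div_cancel_left _ hℓ.pos]
    rw [if_pos (dvd_mul_of_dvd_left (dvd_pow_self ℓ b.succ_ne_zero) w), hdiv, hσ, hσ, hσ,
      hgeom, hgeom b]
    ring

theorem sigmaTerm_of_not_dvd {k d : ℕ} (h : ¬ d ∣ k) : sigmaTerm k d = 0 := if_neg h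

theorem natCast_mul_sigmaTerm {d : ℕ} (hd : d ≠ 0) (k : ℕ) :
    (k : ℚ) * sigmaTerm k d = if d ∣ k then (d * sigma1 (k / d) : ℕ) else 0 := by
  unfold sigmaTerm
  split_ifs with hdk
  · obtain ⟨q, rfl⟩ := hdk
    rcases eq_or_ne q 0 with rfl | hq
    · simp [sigma1]
    rw [Nat.mul_div_cancel_left q (Nat.pos_of_ne_zero hd)]
    push_cast
    field_simp
  · simp

theorem sigmaTerm_mul_mul {m : ℕ} (hm : m ≠ 0) (k d : ℕ) :
    sigmaTerm (k * m) (d * m) = sigmaTerm k d := by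
  have hm' : (m : ℚ) ≠ 0 := by exact_mod_cast hm
  simp only [sigmaTerm, Nat.mul_dvd_mul_iff_right (Nat.pos_of_ne_zero hm),
    Nat.mul_div_mul_right _ _ (Nat.pos_of_ne_zero hm), Nat.cast_mul, mul_div_mul_right _ _ hm']

theorem sigmaTerm_relation_of_even {k : ℕ} (hk : Even k) :
    2 * sigmaTerm k 1 + sigmaTerm k 4 = 3 * sigmaTerm k 2 := by
  obtain ⟨m, rfl⟩ := hk
  rw [← two_mul]
  rcases eq_or_ne m 0 with rfl | hm
  · simp [sigmaTerm]
  have h1 := natCast_mul_sigmaTerm one_ne_zero (2 * m)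
  have h2 := natCast_mul_sigmaTerm two_ne_zero (2 * m)
  have h4 := natCast_mul_sigmaTerm four_ne_zero (2 * m)
  rw [if_pos (one_dvd _), Nat.div_one] at h1
  rw [if_pos (dvd_mul_right 2 m), Nat.mul_div_cancel_left m two_pos] at h2
  have h4dvd : 4 ∣ 2 * m ↔ 2 ∣ m := Nat.mul_dvd_mul_iff_left (b := 2) two_pos
  have h4div : 2 * m / 4 = m / 2 := Nat.mul_div_mul_left (m := 2) m 2 two_pos
  simp only [h4dvd, h4div] at h4
  have hecke := congrArg (Nat.cast (R := ℚ)) (sigma1_prime_mul Nat.prime_two m)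
  refine mul_left_cancel₀ (show ((2 * m : ℕ) : ℚ) ≠ 0 by positivity) ?_
  split_ifs at hecke h4 <;> push_cast at hecke h1 h2 h4 ⊢ <;>
    linear_combination 2 * h1 + h4 - 3 * h2 + 2 * hecke

theorem sigmaTerm_mul_relation_of_even {k m : ℕ} (hm : Odd m) (hk : Even k) :
    2 * sigmaTerm k m + sigmaTerm k (4 * m) = 3 * sigmaTerm k (2 * m) := by
  by_cases hmk : m ∣ k
  · obtain ⟨q, rfl⟩ := hmk
    have hq : Even q := (Nat.even_mul.mp hk).resolve_left (Nat.not_even_iff_odd.mpr hm)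
    have hm0 : m ≠ 0 := hm.pos.ne'
    rw [mul_comm m q, sigmaTerm_mul_mul hm0, sigmaTerm_mul_mul hm0]
    have h1 : sigmaTerm (q * m) m = sigmaTerm q 1 := by
      simpa using sigmaTerm_mul_mul hm0 q 1
    rw [h1]
    exact sigmaTerm_relation_of_even hq
  · have hdvd (d : ℕ) : ¬ d * m ∣ k := fun h => hmk (dvd_trans (dvd_mul_left m d) h)
    rw [sigmaTerm_of_not_dvd hmk, sigmaTerm_of_not_dvd (hdvd 4), sigmaTerm_of_not_dvd (hdvd 2)]
    ring

theorem ite_odd_mul_alphaP {p : ℕ} (hp : Odd p) (k : ℕ) (x y : ℚ) :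
    (if Odd k then x + 2 * y else x) * alphaP p k
      = (x + 2 * y) * (sigmaTerm k 1 + sigmaTerm k p)
        + (2 * x + y) * (sigmaTerm k 4 + sigmaTerm k (4 * p))
        - 3 * (x + y) * (sigmaTerm k 2 + sigmaTerm k (2 * p)) := by
  unfold alphaP
  split_ifs with hk
  · have hdvd {d : ℕ} (hd : 2 ∣ d) : sigmaTerm k d = 0 := sigmaTerm_of_not_dvd fun h =>
      Nat.not_even_iff_odd.mpr hk (even_iff_two_dvd.mpr (hd.trans h))
    rw [hdvd (d := 2) dvd_rfl, hdvd (d := 4) ⟨2, rfl⟩, hdvd (d := 2 * p) (dvd_mul_right 2 p),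
      hdvd (d := 4 * p) ⟨2 * p, by ring⟩]
    ring
  · have hk := Nat.not_odd_iff_even.mp hk
    linear_combination (-y) * sigmaTerm_relation_of_even hk
      + (-y) * sigmaTerm_mul_relation_of_even hp hk

theorem dvd_mul_sub_one {R : Type*} [CommRing R] {x a b : R} (ha : x ∣ a - 1) (hb : x ∣ b - 1) :
    x ∣ a * b - 1 := by
  have : a * b - 1 = (a - 1) * b + (b - 1) := by ring
  rw [this]
  exact dvd_add (dvd_mul_of_dvd_left ha b) hb

theorem dvd_prod_sub_one {R ι : Type*} [CommRing R] {x : R} {s : Finset ι} {f : ι → R}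
    (h : ∀ i ∈ s, x ∣ f i - 1) : x ∣ ∏ i ∈ s, f i - 1 :=
  prod_induction f (fun a => x ∣ a - 1) (fun _ _ => dvd_mul_sub_one) (by simp) h

theorem Nat.Partition.toFinsupp_prod_eq_bP_summand {l : ℕ} (J : l.Partition) (p n : ℕ)
    (u v : ℚ) :
    J.parts.toFinsupp.prod
        (fun k m => (-(n : ℚ) * (if Odd k then u else v) * alphaP p k) ^ m / m.factorial)
      = (-(n : ℚ)) ^ normJ J * u ^ oddJ J * v ^ evenJ J * Wp p J := by
  have hweight : (J.parts.map fun k => if Odd k then u else v).prod = u ^ oddJ J * v ^ evenJ J := by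
    conv_lhs => rw [← Multiset.filter_add_not Odd J.parts]
    rw [Multiset.map_add, Multiset.prod_add,
      Multiset.map_congr rfl fun k hk => if_pos (Multiset.mem_filter.mp hk).2,
      Multiset.map_congr rfl fun k hk => if_neg (Multiset.mem_filter.mp hk).2,
      Multiset.map_const', Multiset.map_const', Multiset.prod_replicate, Multiset.prod_replicate,
      Multiset.filter_congr (p := fun k => ¬ Odd k) (q := Even) fun k _ => Nat.not_odd_iff_even,
      oddJ, evenJ]
  simp only [Finsupp.prod, Multiset.toFinsupp_support, Multiset.toFinsupp_apply, mul_pow,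
    mul_div_assoc, prod_mul_distrib, prod_pow_eq_pow_sum, Multiset.toFinset_sum_count_eq,
    ← prod_multiset_map_count, hweight, Wp, mult, normJ]
  ring

namespace PowerSeries

open scoped WithPiTopology

variable {R : Type*} [CommRing R]

/-- `L` is the logarithmic derivative `X F' / F` of `F`, stated without dividing by `F`. -/
def HasLogDeriv (F L : R⟦X⟧) : Prop := X * d⁄dX R F = L * F

theorem hasLogDeriv_one : HasLogDeriv (1 : R⟦X⟧) 0 := by
  simp [HasLogDeriv]

theorem HasLogDeriv.mul {F G L M : R⟦X⟧} (hF : HasLogDeriv F L) (hG : HasLogDeriv G M) :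
    HasLogDeriv (F * G) (L + M) := by
  unfold HasLogDeriv at *
  rw [Derivation.leibniz, smul_eq_mul, smul_eq_mul]
  linear_combination F * hG + G * hF

theorem HasLogDeriv.pow {F L : R⟦X⟧} (hF : HasLogDeriv F L) (t : ℕ) :
    HasLogDeriv (F ^ t) (t • L) := by
  induction t with
  | zero => simpa using hasLogDeriv_one
  | succ t ih => simpa [pow_succ, add_mul] using ih.mul hF

theorem HasLogDeriv.prod {ι : Type*} {s : Finset ι} {F L : ι → R⟦X⟧}
    (h : ∀ i ∈ s, HasLogDeriv (F i) (L i)) :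
    HasLogDeriv (∏ i ∈ s, F i) (∑ i ∈ s, L i) := by
  classical
  induction s using Finset.induction_on with
  | empty => simpa using hasLogDeriv_one
  | insert a s ha ih =>
    rw [prod_insert ha, sum_insert ha]
    exact (h a (mem_insert_self a s)).mul (ih fun i hi => h i (mem_insert_of_mem hi))

theorem HasLogDeriv.expand {F L : R⟦X⟧} (hF : HasLogDeriv F L) {k : ℕ} (hk : k ≠ 0) :
    HasLogDeriv (expand k hk F) (k • expand k hk L) := by
  unfold HasLogDeriv at *
  have hX : X * d⁄dX R (X ^ k : R⟦X⟧) = k • X ^ k := by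
    rw [derivative_pow, derivative_X, mul_one, ← mul_assoc, mul_comm X, mul_assoc,
      ← pow_succ', Nat.sub_add_cancel (Nat.pos_of_ne_zero hk), nsmul_eq_mul]
  calc X * d⁄dX R (PowerSeries.expand k hk F)
      = PowerSeries.expand k hk (d⁄dX R F) * (X * d⁄dX R (X ^ k : R⟦X⟧)) := by
        rw [expand_apply, derivative_subst (HasSubst.X_pow hk), ← expand_apply _ hk]; ring
    _ = k • PowerSeries.expand k hk (X * d⁄dX R F) := by
        rw [hX, map_mul, expand_X, mul_smul_comm, mul_comm]
    _ = k • PowerSeries.expand k hk L * PowerSeries.expand k hk F := by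
        rw [hF, map_mul, smul_mul_assoc]

/-- `X F' = L F` determines each coefficient of `F` from the lower ones and those of `L`. -/
theorem HasLogDeriv.coeff_eq_of_coeff_eq [IsAddTorsionFree R] {F G L M : R⟦X⟧}
    (hF : HasLogDeriv F L) (hG : HasLogDeriv G M) (hF0 : constantCoeff F = 1)
    (hG0 : constantCoeff G = 1) {N : ℕ} (hLM : ∀ j ≤ N, coeff j L = coeff j M) :
    ∀ j ≤ N, coeff j F = coeff j G := by
  have coeff_succ {H K : R⟦X⟧} (hH : HasLogDeriv H K) (j : ℕ) :
      (j + 1) • coeff (j + 1) H = coeff (j + 1) (K * H) := by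
    rw [← hH, coeff_succ_X_mul, coeff_derivative, nsmul_eq_mul, mul_comm]
    push_cast; ring
  have coeff_zero {H K : R⟦X⟧} (hH : HasLogDeriv H K) (hH0 : constantCoeff H = 1) :
      coeff 0 K = 0 := by
    simpa [coeff_zero_eq_constantCoeff_apply, hH0] using (congrArg (coeff 0) hH).symm
  intro j
  induction j using Nat.strong_induction_on with
  | _ j ih =>
    intro hj
    rcases j with _ | j
    · rw [coeff_zero_eq_constantCoeff_apply, coeff_zero_eq_constantCoeff_apply, hF0, hG0]
    refine nsmul_right_injective j.succ_ne_zero ?_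
    simp only [coeff_succ hF, coeff_succ hG, coeff_mul]
    refine sum_congr rfl fun ⟨a, b⟩ hab => ?_
    rw [HasAntidiagonal.mem_antidiagonal] at hab
    rcases eq_or_ne a 0 with rfl | ha
    · rw [coeff_zero hF hF0, coeff_zero hG hG0, zero_mul, zero_mul]
    · rw [hLM a (by omega), ih b (by omega) (by omega)]

/-- `-b X^b / (1 - X^b)`. -/
def logDerivOneSubXPow (b : ℕ) : R⟦X⟧ :=
  mk fun j => if b ∣ j ∧ j ≠ 0 then -(b : R) else 0

theorem hasLogDeriv_one_sub_X : HasLogDeriv (1 - X : R⟦X⟧) (1 - mk 1) := by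
  rw [HasLogDeriv, sub_mul, mk_one_mul_one_sub_eq_one]
  simp

theorem hasLogDeriv_one_sub_X_pow {b : ℕ} (hb : b ≠ 0) :
    HasLogDeriv (1 - X ^ b : R⟦X⟧) (logDerivOneSubXPow b) := by
  convert hasLogDeriv_one_sub_X.expand hb using 1
  · simp
  · ext j
    rw [map_nsmul, coeff_expand, logDerivOneSubXPow, coeff_mk, nsmul_eq_mul]
    by_cases hbj : b ∣ j
    · obtain ⟨q, rfl⟩ := hbj
      rw [Nat.mul_div_cancel_left q (Nat.pos_of_ne_zero hb)]
      rcases eq_or_ne q 0 with rfl | hq <;> simp [*]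
    · simp [hbj]

theorem coeff_sum_logDerivOneSubXPow {b N j : ℕ} (hb : b ≠ 0) (hj : j ≤ N) :
    coeff j (∑ M ∈ Icc 1 N, logDerivOneSubXPow (b * M) : ℚ⟦X⟧) = -(j * sigmaTerm j b) := by
  simp only [map_sum, logDerivOneSubXPow, coeff_mk]
  by_cases hbj : b ∣ j ∧ j ≠ 0
  · obtain ⟨⟨q, rfl⟩, hq⟩ := hbj
    have hq0 : q ≠ 0 := by rintro rfl; simp at hq
    have hterm (M : ℕ) : (if b * M ∣ b * q ∧ b * q ≠ 0 then -((b * M : ℕ) : ℚ) else 0)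
        = -(b : ℚ) * (if M ∣ q then (M : ℚ) else 0) := by
      simp [Nat.mul_dvd_mul_iff_left (Nat.pos_of_ne_zero hb), hq]
    have hdiv : (Icc 1 N).filter (· ∣ q) = q.divisors := by
      ext M
      simp only [mem_filter, mem_Icc, Nat.mem_divisors]
      constructor
      · rintro ⟨-, hM⟩; exact ⟨hM, hq0⟩
      · rintro ⟨hM, -⟩
        exact ⟨⟨Nat.pos_of_dvd_of_pos hM (Nat.pos_of_ne_zero hq0),
          ((Nat.le_of_dvd (Nat.pos_of_ne_zero hq0) hM).trans
            (Nat.le_mul_of_pos_left q (Nat.pos_of_ne_zero hb))).trans hj⟩, hM⟩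
    rw [sum_congr rfl fun M _ => hterm M, ← mul_sum, ← sum_filter, hdiv,
      natCast_mul_sigmaTerm hb, if_pos (dvd_mul_right b q),
      Nat.mul_div_cancel_left q (Nat.pos_of_ne_zero hb)]
    simp [sigma1]
  · rw [sum_eq_zero fun M _ => if_neg fun hM => hbj ⟨(dvd_mul_right b M).trans hM.1, hM.2⟩]
    rcases not_and_or.mp hbj with hbj | hj0
    · simp [sigmaTerm_of_not_dvd hbj]
    · simp [not_not.mp hj0]

/-- `exp (c X^k)`. -/
noncomputable def expMonomial (c : ℚ) (k : ℕ) : ℚ⟦X⟧ :=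
  mk fun d => if k ∣ d then c ^ (d / k) / (d / k).factorial else 0

theorem expMonomial_eq_expand (c : ℚ) {k : ℕ} (hk : k ≠ 0) :
    expMonomial c k = expand k hk (expMonomial c 1) := by
  ext d
  simp [expMonomial, coeff_expand]

theorem hasLogDeriv_expMonomial_one (c : ℚ) : HasLogDeriv (expMonomial c 1) (C c * X) := by
  ext (_ | d)
  · simp [mul_assoc]
  · rw [coeff_succ_X_mul, coeff_derivative, mul_assoc, coeff_C_mul, coeff_succ_X_mul]
    simp only [expMonomial, coeff_mk, one_dvd, if_true, Nat.div_one, Nat.factorial_succ]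
    push_cast
    field_simp
    ring

theorem hasLogDeriv_expMonomial (c : ℚ) {k : ℕ} (hk : k ≠ 0) :
    HasLogDeriv (expMonomial c k) (C (k * c) * X ^ k) := by
  convert (hasLogDeriv_expMonomial_one c).expand hk using 1
  · exact expMonomial_eq_expand c hk
  · rw [map_mul (expand k hk), expand_C, expand_X, nsmul_eq_mul, map_mul C, map_natCast]; ring

theorem X_pow_dvd_expMonomial_sub_one (c : ℚ) (k : ℕ) : X ^ k ∣ expMonomial c k - 1 := by
  refine X_pow_dvd_iff.mpr fun m hm => ?_
  rcases eq_or_ne m 0 with rfl | hm0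
  · simp [expMonomial]
  · have : ¬ k ∣ m := Nat.not_dvd_of_pos_of_lt (Nat.pos_of_ne_zero hm0) hm
    simp [expMonomial, this, hm0]

theorem hasSum_expMonomial (c : ℚ) {k : ℕ} (hk : k ≠ 0) :
    HasSum (fun j => (c ^ (j + 1) / (j + 1).factorial) • (X : ℚ⟦X⟧) ^ (k * (j + 1)))
      (expMonomial c k - 1) := by
  rw [WithPiTopology.hasSum_iff_hasSum_coeff]
  intro d
  simp only [map_smul, coeff_X_pow, smul_eq_mul, mul_ite, mul_one, mul_zero, map_sub,
    expMonomial, coeff_mk, coeff_one]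
  by_cases hd : k ∣ d ∧ d ≠ 0
  · obtain ⟨⟨q, rfl⟩, hq⟩ := hd
    obtain ⟨j, rfl⟩ := Nat.exists_eq_add_one_of_ne_zero (right_ne_zero_of_mul hq)
    rw [if_pos (dvd_mul_right k _), if_neg hq, sub_zero,
      Nat.mul_div_cancel_left _ (Nat.pos_of_ne_zero hk)]
    convert hasSum_single j fun j' hj' => ?_ using 1
    · simp
    · simp [Nat.mul_left_cancel_iff (Nat.pos_of_ne_zero hk), Ne.symm hj']
  · have hterm (j : ℕ) : d ≠ k * (j + 1) := by
      rintro rfl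
      exact hd ⟨dvd_mul_right _ _, mul_ne_zero hk j.succ_ne_zero⟩
    simp only [hterm, if_false]
    rcases not_and_or.mp hd with h | h
    · have hd0 : d ≠ 0 := by rintro rfl; exact h (dvd_zero k)
      simp [h, hd0, hasSum_zero]
    · simp [not_not.mp h, hasSum_zero]

theorem X_pow_dvd_one_sub_X_pow_pow_sub_one {a b : ℕ} (hab : a ≤ b) (e : ℕ) :
    X ^ a ∣ (1 - X ^ b : R⟦X⟧) ^ e - 1 := by
  have h := sub_dvd_pow_sub_pow (1 - X ^ b : R⟦X⟧) 1 e
  rw [one_pow, sub_sub_cancel_left] at h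
  exact (pow_dvd_pow X hab).neg_right.trans h

theorem coeff_prod_eq_of_subset {ι : Type*} [DecidableEq ι] {f : ι → R⟦X⟧}
    {s t : Finset ι} (hst : s ⊆ t) {d : ℕ} (h : ∀ i ∈ t \ s, X ^ (d + 1) ∣ f i - 1) :
    coeff d (∏ i ∈ t, f i) = coeff d (∏ i ∈ s, f i) := by
  obtain ⟨g, hg⟩ := dvd_prod_sub_one h
  have hzero : coeff d ((X ^ (d + 1) * g) * ∏ i ∈ s, f i) = 0 := by
    rw [mul_assoc, coeff_X_pow_mul', if_neg (by omega)]
  rw [← prod_sdiff hst, ← sub_add_cancel (∏ i ∈ t \ s, f i) 1, hg, add_mul, one_mul, map_add,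
    hzero, zero_add]

section InfProd

variable {f g : ℕ → ℚ⟦X⟧}

theorem constantCoeff_prod_Icc (hf : ∀ M, X ^ M ∣ f M - 1) (N : ℕ) :
    constantCoeff (∏ M ∈ Icc 1 N, f M) = 1 := by
  have : X ∣ ∏ M ∈ Icc 1 N, f M - 1 := dvd_prod_sub_one fun M hM =>
    (dvd_pow_self X (by simp at hM; omega)).trans (hf M)
  rwa [X_dvd_iff, map_sub, map_one, sub_eq_zero] at this

theorem hasProd_infProd (hf : ∀ M, X ^ M ∣ f M - 1) :
    HasProd (fun i => f (i + 1)) (infProd f) := by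
  rw [HasProd, WithPiTopology.tendsto_iff_coeff_tendsto]
  refine fun d => tendsto_atTop_of_eventually_const fun s (hs : range d ⊆ s) => ?_
  rw [coeff_prod_eq_of_subset hs, infProd, coeff_mk, range_eq_Ico, prod_Ico_add']
  · rfl
  intro i hi
  simp only [mem_sdiff, mem_range] at hi
  exact (pow_dvd_pow X (by omega)).trans (hf (i + 1))

theorem infProd_mul (hf : ∀ M, X ^ M ∣ f M - 1) (hg : ∀ M, X ^ M ∣ g M - 1) :
    infProd (fun M => f M * g M) = infProd f * infProd g :=
  (hasProd_infProd fun M => dvd_mul_sub_one (hf M) (hg M)).unique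
    ((hasProd_infProd hf).mul (hasProd_infProd hg))

end InfProd

theorem mk_bP_eq_infProd (p n : ℕ) (u v : ℚ) :
    mk (fun l => bP p n l u v)
      = infProd fun k => expMonomial (-(n : ℚ) * (if Odd k then u else v) * alphaP p k) k := by
  set c : ℕ → ℚ := fun k => -(n : ℚ) * (if Odd k then u else v) * alphaP p k
  have hgenFun : mk (fun l => bP p n l u v)
      = Nat.Partition.genFun fun k m => c k ^ m / m.factorial := by
    ext l
    rw [coeff_mk, Nat.Partition.coeff_genFun]
    exact sum_congr rfl fun J _ => (J.toFinsupp_prod_eq_bP_summand p n u v).symm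
  rw [hgenFun]
  refine (Nat.Partition.hasProd_genFun _).unique ?_
  refine (hasProd_infProd fun M => X_pow_dvd_expMonomial_sub_one (c M) M).congr_fun fun i => ?_
  rw [(hasSum_expMonomial (c (i + 1)) i.succ_ne_zero).tsum_eq, add_sub_cancel]

theorem hasLogDeriv_prod_one_sub_X_pow_mul_pow {b : ℕ} (hb : b ≠ 0) (e N : ℕ) :
    HasLogDeriv (∏ M ∈ Icc 1 N, (1 - X ^ (b * M) : R⟦X⟧) ^ e)
      (e • ∑ M ∈ Icc 1 N, logDerivOneSubXPow (b * M)) := by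
  rw [smul_sum]
  refine HasLogDeriv.prod fun M hM => (hasLogDeriv_one_sub_X_pow (mul_ne_zero hb ?_)).pow e
  simp only [mem_Icc] at hM
  omega

theorem hasLogDeriv_prod_expMonomial (c : ℕ → ℚ) (N : ℕ) :
    HasLogDeriv (∏ M ∈ Icc 1 N, expMonomial (c M) M)
      (∑ M ∈ Icc 1 N, C ((M : ℚ) * c M) * X ^ M) := by
  refine HasLogDeriv.prod fun M hM => hasLogDeriv_expMonomial (c M) ?_
  simp only [mem_Icc] at hM
  omega

theorem coeff_sum_C_mul_X_pow (c : ℕ → ℚ) {N j : ℕ} (hj : j ≤ N) :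
    coeff j (∑ M ∈ Icc 1 N, C ((M : ℚ) * c M) * X ^ M) = j * c j := by
  simp only [map_sum, coeff_C_mul_X_pow]
  rcases eq_or_ne j 0 with rfl | hj0
  · simp
  · rw [sum_ite_eq, if_pos (mem_Icc.mpr ⟨Nat.pos_of_ne_zero hj0, hj⟩)]

theorem coeff_logDerivs_agree {p : ℕ} (hp : Odd p) (n i h : ℕ) {N j : ℕ} (hj : j ≤ N) :
    coeff j ((n * (i + 2 * h)) • ∑ M ∈ Icc 1 N, logDerivOneSubXPow M
        + (n * (2 * i + h)) • ∑ M ∈ Icc 1 N, logDerivOneSubXPow (4 * M)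
        + (n * (i + 2 * h)) • ∑ M ∈ Icc 1 N, logDerivOneSubXPow (p * M)
        + (n * (2 * i + h)) • ∑ M ∈ Icc 1 N, logDerivOneSubXPow (4 * p * M) : ℚ⟦X⟧)
      = coeff j ((3 * n * (i + h)) • ∑ M ∈ Icc 1 N, logDerivOneSubXPow (2 * M)
        + (3 * n * (i + h)) • ∑ M ∈ Icc 1 N, logDerivOneSubXPow (2 * p * M)
        + ∑ M ∈ Icc 1 N,
            C ((M : ℚ) * (-(n : ℚ) * (if Odd M then (i : ℚ) + 2 * h else i) * alphaP p M))
              * X ^ M) := by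
  have hp0 : p ≠ 0 := hp.pos.ne'
  have h1 := coeff_sum_logDerivOneSubXPow one_ne_zero hj
  simp only [one_mul] at h1
  simp only [map_add, map_nsmul]
  simp only [nsmul_eq_mul, coeff_sum_C_mul_X_pow _ hj, h1,
    coeff_sum_logDerivOneSubXPow four_ne_zero hj, coeff_sum_logDerivOneSubXPow hp0 hj,
    coeff_sum_logDerivOneSubXPow (mul_ne_zero four_ne_zero hp0) hj,
    coeff_sum_logDerivOneSubXPow two_ne_zero hj,
    coeff_sum_logDerivOneSubXPow (mul_ne_zero two_ne_zero hp0) hj]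
  push_cast
  linear_combination (j * n : ℚ) * ite_odd_mul_alphaP hp j i h

end PowerSeries

open PowerSeries in
theorem XiYh_q_expansion_general (p : ℕ) (hpodd : Odd p)
    (n : ℕ) (i h : ℕ) :
    infProd (fun M =>
        (1 - (X : PowerSeries ℚ) ^ M) ^ (n * (i + 2 * h))
          * (1 - (X : PowerSeries ℚ) ^ (4 * M)) ^ (n * (2 * i + h))
          * (1 - (X : PowerSeries ℚ) ^ (p * M)) ^ (n * (i + 2 * h))
          * (1 - (X : PowerSeries ℚ) ^ (4 * p * M)) ^ (n * (2 * i + h)))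
      = infProd (fun M =>
          (1 - (X : PowerSeries ℚ) ^ (2 * M)) ^ (3 * n * (i + h))
            * (1 - (X : PowerSeries ℚ) ^ (2 * p * M)) ^ (3 * n * (i + h))) *
        PowerSeries.mk (fun l => bP p n l ((i : ℚ) + 2 * h) i) := by
  have hp : p ≠ 0 := hpodd.pos.ne'
  have hfac {b : ℕ} (hb : b ≠ 0) (e M : ℕ) : X ^ M ∣ (1 - X ^ (b * M) : ℚ⟦X⟧) ^ e - 1 :=
    X_pow_dvd_one_sub_X_pow_pow_sub_one (Nat.le_mul_of_pos_left M (Nat.pos_of_ne_zero hb)) e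
  have hlhs (M : ℕ) := dvd_mul_sub_one (dvd_mul_sub_one (dvd_mul_sub_one
    (by simpa using hfac one_ne_zero (n * (i + 2 * h)) M) (hfac four_ne_zero (n * (2 * i + h)) M))
    (hfac hp (n * (i + 2 * h)) M)) (hfac (mul_ne_zero four_ne_zero hp) (n * (2 * i + h)) M)
  have hrhs (M : ℕ) := dvd_mul_sub_one (hfac two_ne_zero (3 * n * (i + h)) M)
    (hfac (mul_ne_zero two_ne_zero hp) (3 * n * (i + h)) M)
  have hexp := fun M => X_pow_dvd_expMonomial_sub_one
    (-(n : ℚ) * (if Odd M then (i : ℚ) + 2 * h else i) * alphaP p M) M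
  rw [mk_bP_eq_infProd, ← infProd_mul hrhs hexp]
  ext d
  rw [infProd, infProd, coeff_mk, coeff_mk]
  refine HasLogDeriv.coeff_eq_of_coeff_eq ?_ ?_ (constantCoeff_prod_Icc hlhs d)
    (constantCoeff_prod_Icc (fun M => dvd_mul_sub_one (hrhs M) (hexp M)) d)
    (fun j hj => coeff_logDerivs_agree hpodd n i h hj) d le_rfl
  · simp only [prod_mul_distrib]
    simpa only [one_mul] using
      (((hasLogDeriv_prod_one_sub_X_pow_mul_pow one_ne_zero (n * (i + 2 * h)) d).mul
        (hasLogDeriv_prod_one_sub_X_pow_mul_pow four_ne_zero (n * (2 * i + h)) d)).mul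
        (hasLogDeriv_prod_one_sub_X_pow_mul_pow hp (n * (i + 2 * h)) d)).mul
        (hasLogDeriv_prod_one_sub_X_pow_mul_pow (mul_ne_zero four_ne_zero hp) (n * (2 * i + h)) d)
  · simp only [prod_mul_distrib]
    exact ((hasLogDeriv_prod_one_sub_X_pow_mul_pow two_ne_zero (3 * n * (i + h)) d).mul
      (hasLogDeriv_prod_one_sub_X_pow_mul_pow (mul_ne_zero two_ne_zero hp) (3 * n * (i + h)) d)).mul
      (hasLogDeriv_prod_expMonomial _ d)

open PowerSeries in
theorem XiYh_q_expansion (p : ℕ) (hp : p.Prime) (hpodd : Odd p)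
    (n : ℕ) (hn : 0 < n) (i h : ℕ) :
    infProd (fun M =>
        (1 - (X : PowerSeries ℚ) ^ M) ^ (n * (i + 2 * h))
          * (1 - (X : PowerSeries ℚ) ^ (4 * M)) ^ (n * (2 * i + h))
          * (1 - (X : PowerSeries ℚ) ^ (p * M)) ^ (n * (i + 2 * h))
          * (1 - (X : PowerSeries ℚ) ^ (4 * p * M)) ^ (n * (2 * i + h)))
      = infProd (fun M =>
          (1 - (X : PowerSeries ℚ) ^ (2 * M)) ^ (3 * n * (i + h))
            * (1 - (X : PowerSeries ℚ) ^ (2 * p * M)) ^ (3 * n * (i + h))) *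
        PowerSeries.mk (fun l => bP p n l ((i : ℚ) + 2 * h) i) :=
  XiYh_q_expansion_general p hpodd n i h
end

section
/- Let p be an odd prime, n a positive integer, m ≥ 1, and 1 ≤ i ≤ m. The (m+1−i)×(m+1−i) matrix A^{i,i} = (b_l(i+2h, i))_{0≤l,h≤m−i} is nonsingular, with determinant det A^{i,i} = (−2n)^{(m+1−i)(m−i)/2}. -/
open Finset

/-! As a polynomial in `u`, `b_l(u, v)` has degree at most `l`, and its coefficient of `u^l` is
`(-n)^l / l!`: only the all-ones partition has `J_o = l`, and `α_p(1) = 1`. Evaluating these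
polynomials at the nodes `c + d h` factors the matrix as a Vandermonde matrix times an
upper-triangular coefficient matrix, so its determinant is
`∏_j d^j j! · (-n)^j / j! = ∏_j (-d n)^j`. -/

open Polynomial Nat

namespace Matrix

variable {R : Type*} [CommRing R] {M : ℕ}

theorem det_vandermonde_natCast (M : ℕ) :
    (vandermonde fun i : Fin M => (i : R)).det = ∏ j : Fin M, ((j : ℕ)! : R) := by
  cases M with
  | zero => simp
  | succ n =>
    rw [det_vandermonde_id_eq_superFactorial, ← prod_range_succ_factorial,
      Fin.prod_univ_eq_prod_range (fun j => ((j ! : ℕ) : R)), Nat.cast_prod]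

theorem det_vandermonde_smul (d : R) (v : Fin M → R) :
    (vandermonde (d • v)).det = (∏ j : Fin M, d ^ (j : ℕ)) * (vandermonde v).det := by
  have : vandermonde (d • v) = vandermonde v * diagonal fun j : Fin M => d ^ (j : ℕ) := by
    ext i j
    simp [vandermonde_apply, mul_pow, mul_comm]
  rw [this, det_mul, det_diagonal, mul_comm]

theorem det_vandermonde_affine (c d : R) (M : ℕ) :
    (vandermonde fun i : Fin M => c + d * i).det = ∏ j : Fin M, d ^ (j : ℕ) * (j : ℕ)! := by
  have : (fun i : Fin M => c + d * i) = fun i => (d • fun i : Fin M => (i : R)) i + c := by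
    ext i
    simp [add_comm]
  rw [this, det_vandermonde_add, det_vandermonde_smul, det_vandermonde_natCast,
    prod_mul_distrib]

theorem det_eval_eq_det_vandermonde_mul_prod_coeff (P : Fin M → R[X])
    (hP : ∀ j, (P j).natDegree ≤ j) (v : Fin M → R) :
    (of fun i j => (P j).eval (v i)).det = (vandermonde v).det * ∏ j, (P j).coeff j := by
  rw [eval_matrixOfPolynomials_eq_vandermonde_mul_matrixOfPolynomials v P hP, det_mul,
    det_of_isUpperTriangular (matrixOfPolynomials_blockTriangular P hP)]
  rfl

end Matrix

namespace Nat.Partition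

@[simps]
def ones (n : ℕ) : n.Partition where
  parts := Multiset.replicate n 1
  parts_pos h := by rw [Multiset.eq_of_mem_replicate h]; exact Nat.one_pos
  parts_sum := by simp

theorem card_parts_le {n : ℕ} (J : n.Partition) : Multiset.card J.parts ≤ n := by
  simpa [J.parts_sum] using Multiset.card_nsmul_le_sum (a := 1) fun _ hx => J.parts_pos hx

theorem eq_ones_of_le_card_parts {n : ℕ} (J : n.Partition) (h : n ≤ Multiset.card J.parts) :
    J = ones n := by
  have hcard : Multiset.card J.parts = n := le_antisymm J.card_parts_le h
  ext1
  rw [ones_parts, Multiset.eq_replicate]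
  refine ⟨hcard, fun x hx => ?_⟩
  obtain ⟨s, hs⟩ := Multiset.exists_cons_of_mem hx
  have hsum := J.parts_sum
  have hs_le : Multiset.card s ≤ s.sum := by
    simpa using Multiset.card_nsmul_le_sum (s := s) (a := 1) fun y hy =>
      J.parts_pos (by simp [hs, hy])
  have hx0 := J.parts_pos hx
  rw [hs, Multiset.sum_cons] at hsum
  rw [hs, Multiset.card_cons] at hcard
  omega

end Nat.Partition

theorem sigmaTerm_one_left {d : ℕ} (hd : d ≠ 1) : sigmaTerm 1 d = 0 := by
  simp [sigmaTerm, hd]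

theorem alphaP_one {p : ℕ} (hp : p ≠ 1) : alphaP p 1 = 1 := by
  rw [alphaP, sigmaTerm_one_left (by decide : 2 ≠ 1), sigmaTerm_one_left (by decide : 4 ≠ 1),
    sigmaTerm_one_left hp, sigmaTerm_one_left (by omega : 2 * p ≠ 1),
    sigmaTerm_one_left (by omega : 4 * p ≠ 1)]
  simp [sigmaTerm, sigma1]

section OnesPartition

open Nat.Partition

theorem normJ_ones (l : ℕ) : normJ (ones l) = l := by
  simp [normJ]

theorem oddJ_ones (l : ℕ) : oddJ (ones l) = l := by
  rw [oddJ, ones_parts, Multiset.filter_eq_self.mpr fun _ ha => by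
    rw [Multiset.eq_of_mem_replicate ha]; exact odd_one, Multiset.card_replicate]

theorem evenJ_ones (l : ℕ) : evenJ (ones l) = 0 := by
  rw [evenJ, ones_parts, Multiset.filter_eq_nil.mpr fun _ ha => by
    rw [Multiset.eq_of_mem_replicate ha]; exact Nat.not_even_one, Multiset.card_zero]

theorem Wp_ones (p l : ℕ) : Wp p (ones l) = alphaP p 1 ^ l / l ! := by
  rcases Nat.eq_zero_or_pos l with rfl | hl
  · simp [Wp]
  · rw [Wp, ones_parts, Multiset.toFinset_replicate, if_neg hl.ne', prod_singleton, mult,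
      ones_parts, Multiset.count_replicate_self]

theorem oddJ_le_card_parts {l : ℕ} (J : l.Partition) : oddJ J ≤ Multiset.card J.parts :=
  Multiset.card_le_card (Multiset.filter_le _ _)

theorem oddJ_le {l : ℕ} (J : l.Partition) : oddJ J ≤ l :=
  (oddJ_le_card_parts J).trans J.card_parts_le

theorem eq_ones_of_oddJ_eq {l : ℕ} (J : l.Partition) (h : oddJ J = l) : J = ones l :=
  J.eq_ones_of_le_card_parts (h.symm.le.trans (oddJ_le_card_parts J))

end OnesPartition

noncomputable def bPoly (p n l : ℕ) (v : ℚ) : ℚ[X] :=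
  ∑ J : l.Partition, C ((-(n : ℚ)) ^ normJ J * v ^ evenJ J * Wp p J) * X ^ oddJ J

theorem eval_bPoly (p n l : ℕ) (u v : ℚ) : (bPoly p n l v).eval u = bP p n l u v := by
  simp only [bPoly, bP, eval_finsetSum, eval_mul, eval_C, eval_pow, eval_X]
  exact sum_congr rfl fun J _ => by ring

theorem natDegree_bPoly_le (p n l : ℕ) (v : ℚ) : (bPoly p n l v).natDegree ≤ l :=
  natDegree_sum_le_of_forall_le _ _ fun J _ =>
    (natDegree_C_mul_X_pow_le _ _).trans (oddJ_le J)

theorem coeff_bPoly_self {p : ℕ} (hp : p ≠ 1) (n l : ℕ) (v : ℚ) :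
    (bPoly p n l v).coeff l = (-(n : ℚ)) ^ l / l ! := by
  simp only [bPoly, finsetSum_coeff, coeff_C_mul, coeff_X_pow]
  rw [sum_eq_single_of_mem (Nat.Partition.ones l) (mem_univ _) fun J _ hJ => by
    rw [if_neg fun h => hJ (eq_ones_of_oddJ_eq J h.symm), mul_zero]]
  rw [oddJ_ones, normJ_ones, evenJ_ones, Wp_ones, alphaP_one hp]
  simp [div_eq_mul_inv]

theorem det_bP_affine {p : ℕ} (hp : p ≠ 1) (n M : ℕ) (c d v : ℚ) :
    (Matrix.of fun l h : Fin M => bP p n l (c + d * ((h : ℕ) : ℚ)) v).det =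
      ∏ j : Fin M, (-(d * n)) ^ (j : ℕ) := by
  have hT : (Matrix.of fun l h : Fin M => bP p n l (c + d * ((h : ℕ) : ℚ)) v) =
      (Matrix.of fun h l : Fin M =>
        (bPoly p n l v).eval (c + d * ((h : ℕ) : ℚ))).transpose := by
    ext l h
    simp [eval_bPoly]
  rw [hT, Matrix.det_transpose, Matrix.det_eval_eq_det_vandermonde_mul_prod_coeff _
    (fun l => natDegree_bPoly_le p n l v), Matrix.det_vandermonde_affine, ← prod_mul_distrib]
  refine prod_congr rfl fun j _ => ?_
  rw [coeff_bPoly_self hp]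
  have : ((j : ℕ)! : ℚ) ≠ 0 := by positivity
  field_simp
  ring

theorem Fin.prod_pow_val {R : Type*} [CommMonoid R] (a : R) (M : ℕ) :
    ∏ j : Fin M, a ^ (j : ℕ) = a ^ (M * (M - 1) / 2) := by
  rw [prod_pow_eq_pow_sum, Fin.sum_univ_eq_sum_range (fun j => j) M, sum_range_id]

theorem Aii_det_general (p : ℕ) (hp : p.Prime) (n : ℕ) (hn : 0 < n)
    (m i : ℕ)
    (A : Matrix (Fin (m + 1 - i)) (Fin (m + 1 - i)) ℚ)
    (hA : ∀ l h : Fin (m + 1 - i), A l h = bP p n l ((i : ℚ) + 2 * (h : ℕ)) i) :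
    A.det = (-(2 * (n : ℚ))) ^ ((m + 1 - i) * (m - i) / 2) ∧ A.det ≠ 0 := by
  have hdet : A.det = (-(2 * (n : ℚ))) ^ ((m + 1 - i) * (m - i) / 2) := by
    have hA' : A = Matrix.of fun l h : Fin (m + 1 - i) =>
        bP p n l ((i : ℚ) + 2 * ((h : ℕ) : ℚ)) i := Matrix.ext hA
    rw [hA', det_bP_affine hp.ne_one, Fin.prod_pow_val,
      show m + 1 - i - 1 = m - i by omega]
  exact ⟨hdet, hdet ▸ pow_ne_zero _ (neg_ne_zero.mpr (by positivity))⟩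

theorem Aii_det (p : ℕ) (hp : p.Prime) (hpodd : Odd p) (n : ℕ) (hn : 0 < n)
    (m i : ℕ) (hi1 : 1 ≤ i) (him : i ≤ m)
    (A : Matrix (Fin (m + 1 - i)) (Fin (m + 1 - i)) ℚ)
    (hA : ∀ l h : Fin (m + 1 - i), A l h = bP p n l ((i : ℚ) + 2 * (h : ℕ)) i) :
    A.det = (-(2 * (n : ℚ))) ^ ((m + 1 - i) * (m - i) / 2) ∧ A.det ≠ 0 :=
  Aii_det_general p hp n hn m i A hA
end

section
/- Let p be an odd prime, n a positive integer, and m ≥ 1. For every l with 0 ≤ l ≤ m−1, Σ_{h=0}^{m} (−1)^h·C(m,h)·b_l(2h, 0) = 0. (Thus Russell's row a_{0,h} = (−1)^h C(m,h) solves the 0-th row system of equations.) -/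
/-! Each partition `J` of `l` contributes a multiple of `u ^ J_o` with `J_o ≤ l`, so `b_l(u, v)`
is a polynomial in `u` of degree at most `l`; the alternating binomial sum is, up to sign, the
`m`-th forward difference at `0`, which kills every polynomial of degree `< m`. -/

open Finset

theorem sum_range_alternating_choose_mul_pow_eq_zero {R : Type*} [CommRing R] {j m : ℕ}
    (hjm : j < m) :
    ∑ k ∈ range (m + 1), (-1 : R) ^ k * m.choose k * (k : R) ^ j = 0 := by
  have hΔ := congr_fun (fwdDiff_iter_pow_eq_zero_of_lt (R := R) hjm) 0
  rw [fwdDiff_iter_eq_sum_shift] at hΔ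
  calc ∑ k ∈ range (m + 1), (-1 : R) ^ k * m.choose k * (k : R) ^ j
      = (-1) ^ m *
          ∑ k ∈ range (m + 1), ((-1 : ℤ) ^ (m - k) * m.choose k) • ((0 : R) + k • 1) ^ j := by
        rw [mul_sum]
        refine sum_congr rfl fun k hk => ?_
        have hkm : k ≤ m := Nat.lt_succ_iff.mp (mem_range.mp hk)
        rw [zsmul_eq_mul, zero_add, nsmul_one]
        push_cast
        rw [← mul_assoc, ← mul_assoc, ← pow_add,
          show m + (m - k) = k + 2 * (m - k) by omega, pow_add, pow_mul]
        simp
    _ = 0 := by rw [hΔ, Pi.zero_apply, mul_zero]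

theorem Nat.Partition.card_parts_le_s10 {N : ℕ} (J : N.Partition) : Multiset.card J.parts ≤ N := by
  simpa [J.parts_sum] using
    Multiset.card_nsmul_le_sum (s := J.parts) (a := 1) fun _ hx => J.parts_pos hx

theorem oddJ_le_s10 {N : ℕ} (J : N.Partition) : oddJ J ≤ N :=
  (Multiset.card_le_card (Multiset.filter_le _ _)).trans J.card_parts_le_s10

theorem bP_eq_sum_mul_pow (p n l : ℕ) (u v : ℚ) :
    bP p n l u v = ∑ J : l.Partition, (-(n : ℚ)) ^ normJ J * v ^ evenJ J * Wp p J * u ^ oddJ J :=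
  sum_congr rfl fun _ _ => by ring

theorem sum_range_alternating_choose_mul_bP_eq_zero (p n : ℕ) {l m : ℕ} (hlm : l < m) (c v : ℚ) :
    ∑ h ∈ range (m + 1), (-1 : ℚ) ^ h * m.choose h * bP p n l (c * h) v = 0 := by
  simp only [bP_eq_sum_mul_pow, mul_sum]
  rw [sum_comm]
  refine sum_eq_zero fun J _ => ?_
  calc ∑ h ∈ range (m + 1), (-1 : ℚ) ^ h * m.choose h *
        ((-(n : ℚ)) ^ normJ J * v ^ evenJ J * Wp p J * (c * h) ^ oddJ J)
      = (-(n : ℚ)) ^ normJ J * v ^ evenJ J * Wp p J * c ^ oddJ J *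
          ∑ h ∈ range (m + 1), (-1 : ℚ) ^ h * m.choose h * (h : ℚ) ^ oddJ J := by
        rw [mul_sum]
        exact sum_congr rfl fun h _ => by ring
    _ = 0 := by
        rw [sum_range_alternating_choose_mul_pow_eq_zero ((oddJ_le_s10 J).trans_lt hlm), mul_zero]

theorem row_zero_solution_general (p : ℕ)
    (n : ℕ) (m : ℕ) (hm : 1 ≤ m) (l : ℕ) (hl : l ≤ m - 1) :
    ∑ h ∈ Finset.range (m + 1),
      (-1 : ℚ) ^ h * (m.choose h) * bP p n l (2 * (h : ℚ)) 0 = 0 :=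
  sum_range_alternating_choose_mul_bP_eq_zero p n (by omega) 2 0

theorem row_zero_solution (p : ℕ) (hp : p.Prime) (hpodd : Odd p)
    (n : ℕ) (hn : 0 < n) (m : ℕ) (hm : 1 ≤ m) (l : ℕ) (hl : l ≤ m - 1) :
    ∑ h ∈ Finset.range (m + 1),
      (-1 : ℚ) ^ h * (m.choose h) * bP p n l (2 * (h : ℚ)) 0 = 0 :=
  row_zero_solution_general p n m hm l hl
end

section
/- Let p be an odd prime, n a positive integer, m ≥ 1, and l ≥ 0. Then Σ_{h=0}^{m} (−1)^{h−1}·C(m,h)·b_{l+m}(2h, 0) = Σ_{d=m}^{l+m} (−1)^{d+m−1}·(2n)^d·P_{d−m}(m)·d!·( Σ_{J ∈ J[l+m], |J| = d, j_k = 0 for all even k} W_p(J) ). -/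
open Finset

/-- P_r(m), defined by P_0(m) = 1, P_r(0) = 0 for r ≥ 1, and
    (r+m)·P_r(m) = m·(P_{r−1}(m) + P_r(m−1)) for r, m ≥ 1. -/
def Ppoly : ℕ → ℕ → ℚ
  | 0, _ => 1
  | _ + 1, 0 => 0
  | r + 1, m + 1 =>
      ((m : ℚ) + 1) * (Ppoly r (m + 1) + Ppoly (r + 1) m) / ((r : ℚ) + 1 + ((m : ℚ) + 1))

/-!
At `v = 0` only partitions into odd parts survive in `b_{l+m}(2h, 0)`, and for such a `J` the
alternating `h`-sum is `(-1)^{m+1} (-2n)^{|J|}` times the `m`-th forward difference of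
`x ↦ x^{|J|}` at `0`, i.e. `m! S(|J|, m)`. This vanishes for `|J| < m`. Absorbing a factor `h` of
`h^{d+1}` into `C(m+1, h)` turns `Δᵐ⁺¹ x^{d+1}(0)` into `(m + 1) Δᵐ x^d(1)`, so
`Δᵐ⁺¹ x^{d+1}(0) = (m + 1)(Δᵐ⁺¹ x^d(0) + Δᵐ x^d(0))`, which is exactly the recurrence defining
`d! P_{d-m}(m)`.
-/

open scoped Nat fwdDiff

section FwdDiff

variable {R : Type*} [CommRing R]

theorem fwdDiff_iter_eq_sum_neg_one_pow (f : R → R) (m : ℕ) (y : R) :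
    (Δ_[1])^[m] f y = ∑ h ∈ range (m + 1), (-1) ^ (m + h) * m.choose h * f (y + h) := by
  rw [fwdDiff_iter_eq_sum_shift]
  refine sum_congr rfl fun h hh => ?_
  have hle : h ≤ m := Nat.lt_succ_iff.mp (mem_range.mp hh)
  rw [show m + h = m - h + 2 * h by omega, pow_add, pow_mul, neg_one_sq, one_pow, mul_one,
    zsmul_eq_mul, nsmul_one]
  push_cast
  ring

theorem fwdDiff_iter_pow_succ_at_zero (d m : ℕ) :
    (Δ_[1])^[m + 1] (fun r : R ↦ r ^ (d + 1)) 0 =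
      (m + 1) * ((Δ_[1])^[m + 1] (fun r : R ↦ r ^ d) 0 + (Δ_[1])^[m] (fun r : R ↦ r ^ d) 0) := by
  have step : (Δ_[1])^[m + 1] (fun r : R ↦ r ^ d) 0 + (Δ_[1])^[m] (fun r : R ↦ r ^ d) 0 =
      (Δ_[1])^[m] (fun r : R ↦ r ^ d) 1 := by
    rw [Function.iterate_succ_apply', fwdDiff, zero_add, sub_add_cancel]
  have absorb (j : ℕ) : ((m + 1).choose (j + 1) : R) * (j + 1) = (m + 1) * m.choose j := by
    exact_mod_cast congrArg (Nat.cast : ℕ → R) (Nat.add_one_mul_choose_eq m j).symm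
  rw [step, fwdDiff_iter_eq_sum_neg_one_pow, fwdDiff_iter_eq_sum_neg_one_pow, sum_range_succ',
    mul_sum, Nat.cast_zero, zero_add, zero_pow d.succ_ne_zero, mul_zero, add_zero]
  refine sum_congr rfl fun j _ => ?_
  push_cast
  linear_combination (-1) ^ (m + j) * (j + 1 : R) ^ d * absorb j

end FwdDiff

theorem Ppoly_succ_succ (r m : ℕ) :
    ((r : ℚ) + 1 + (m + 1)) * Ppoly (r + 1) (m + 1) =
      (m + 1) * (Ppoly r (m + 1) + Ppoly (r + 1) m) := by
  rw [Ppoly]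
  field_simp

theorem fwdDiff_iter_pow_at_zero_eq_factorial_mul_Ppoly {d m : ℕ} (h : m ≤ d) :
    (Δ_[1])^[m] (fun r : ℚ ↦ r ^ d) 0 = d ! * Ppoly (d - m) m := by
  induction d generalizing m with
  | zero => simp [Nat.le_zero.mp h, Ppoly]
  | succ d ih =>
    rcases h.eq_or_lt with rfl | hlt
    · simp [fwdDiff_iter_eq_factorial, Ppoly]
    rcases m with _ | m
    · simp [Ppoly]
    rw [fwdDiff_iter_pow_succ_at_zero, ih (by omega), ih (by omega)]
    obtain ⟨r, rfl⟩ := Nat.exists_eq_add_of_le (Nat.lt_succ_iff.mp hlt)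
    rw [show m + 1 + r - (m + 1) = r by omega, show m + 1 + r - m = r + 1 by omega,
      show m + 1 + r + 1 - (m + 1) = r + 1 by omega, Nat.factorial_succ]
    push_cast
    linear_combination (-((m + 1 + r)! : ℚ)) * Ppoly_succ_succ r m

theorem sum_eq_sum_Icc_fiberwise {α M : Type*} [AddCommMonoid M] {s : Finset α} {g : α → ℕ}
    {f : α → M} {a b : ℕ} (hb : ∀ x ∈ s, g x ≤ b) (ha : ∀ x ∈ s, g x < a → f x = 0) :
    ∑ x ∈ s, f x = ∑ d ∈ Icc a b, ∑ x ∈ s with g x = d, f x := by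
  rw [← sum_fiberwise_of_maps_to (t := Iic b) fun x hx => mem_Iic.mpr (hb x hx)]
  refine (sum_subset (fun d hd => mem_Iic.mpr (mem_Icc.mp hd).2) fun d hd hd' => ?_).symm
  refine sum_eq_zero fun x hx => ?_
  obtain ⟨hxs, rfl⟩ := mem_filter.mp hx
  exact ha x hxs (by simp only [mem_Icc, mem_Iic] at hd hd'; omega)

section Partitions

variable {N : ℕ}

theorem normJ_le (J : N.Partition) : normJ J ≤ N := by
  simpa [normJ, J.parts_sum] using Multiset.card_nsmul_le_sum (fun x hx => J.parts_pos hx)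

theorem evenJ_eq_zero_iff (J : N.Partition) : evenJ J = 0 ↔ ∀ k ∈ J.parts, Odd k := by
  simp [evenJ, Multiset.filter_eq_nil]

theorem oddJ_eq_normJ {J : N.Partition} (h : ∀ k ∈ J.parts, Odd k) : oddJ J = normJ J := by
  rw [oddJ, normJ, Multiset.filter_eq_self.mpr h]

theorem bP_zero_right (p n : ℕ) (u : ℚ) :
    bP p n N u 0 = ∑ J ∈ Nat.Partition.restricted N Odd, (-(n * u)) ^ normJ J * Wp p J := by
  rw [bP, Nat.Partition.restricted, sum_filter]
  refine sum_congr rfl fun J _ => ?_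
  split_ifs with h
  · rw [oddJ_eq_normJ h, (evenJ_eq_zero_iff J).mpr h]
    ring
  · rw [zero_pow (mt (evenJ_eq_zero_iff J).mp h)]
    ring

theorem sum_neg_one_zpow_choose_mul_bP (p n m : ℕ) :
    ∑ h ∈ range (m + 1), (-1 : ℚ) ^ ((h : ℤ) - 1) * m.choose h * bP p n N (2 * h) 0 =
      ∑ J ∈ Nat.Partition.restricted N Odd,
        (-1) ^ (m + 1) * (-(2 * n)) ^ normJ J * (Δ_[1])^[m] (fun r : ℚ ↦ r ^ normJ J) 0 *
          Wp p J := by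
  simp_rw [bP_zero_right, mul_sum]
  rw [sum_comm]
  refine sum_congr rfl fun J _ => ?_
  rw [fwdDiff_iter_eq_sum_neg_one_pow, mul_sum, sum_mul]
  refine sum_congr rfl fun h _ => ?_
  have sign : (-1 : ℚ) ^ (m + 1) * (-1) ^ (m + h) = (-1) ^ ((h : ℤ) - 1) := by
    rw [zpow_sub_one₀ (by norm_num), zpow_natCast, ← pow_add,
      show m + 1 + (m + h) = h + 1 + 2 * m by ring, pow_add, pow_mul]
    simp [pow_succ]
  rw [zero_add]
  linear_combination (-(m.choose h * (-(n * (2 * h))) ^ normJ J * Wp p J : ℚ)) * sign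

end Partitions

theorem component_formula_general (p : ℕ)
    (n : ℕ) (m : ℕ) (hm : 1 ≤ m) (l : ℕ) :
    ∑ h ∈ Finset.range (m + 1),
        (-1 : ℚ) ^ ((h : ℤ) - 1) * (m.choose h) * bP p n (l + m) (2 * (h : ℚ)) 0
      = ∑ d ∈ Finset.Icc m (l + m),
          (-1 : ℚ) ^ (d + m - 1) * (2 * (n : ℚ)) ^ d * Ppoly (d - m) m * (Nat.factorial d) *
            ∑ J ∈ Finset.univ.filter
                (fun J : (l + m).Partition => normJ J = d ∧ ∀ k ∈ J.parts, Odd k),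
              Wp p J := by
  rw [sum_neg_one_zpow_choose_mul_bP, sum_eq_sum_Icc_fiberwise (fun J _ => normJ_le J)
    fun J _ hJ => by rw [fwdDiff_iter_pow_eq_zero_of_lt (R := ℚ) hJ]; simp]
  refine sum_congr rfl fun d hd => ?_
  rw [mul_sum, Nat.Partition.restricted, filter_filter]
  refine sum_congr (filter_congr fun J _ => and_comm) fun J hJ => ?_
  obtain rfl := (mem_filter.mp hJ).2.1
  rw [fwdDiff_iter_pow_at_zero_eq_factorial_mul_Ppoly (mem_Icc.mp hd).1, neg_pow (2 * (n : ℚ))]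
  obtain ⟨k, rfl⟩ := Nat.exists_eq_add_of_le' hm
  rw [show normJ J + (k + 1) - 1 = normJ J + k by omega]
  ring

theorem component_formula (p : ℕ) (hp : p.Prime) (hpodd : Odd p)
    (n : ℕ) (hn : 0 < n) (m : ℕ) (hm : 1 ≤ m) (l : ℕ) :
    ∑ h ∈ Finset.range (m + 1),
        (-1 : ℚ) ^ ((h : ℤ) - 1) * (m.choose h) * bP p n (l + m) (2 * (h : ℚ)) 0
      = ∑ d ∈ Finset.Icc m (l + m),
          (-1 : ℚ) ^ (d + m - 1) * (2 * (n : ℚ)) ^ d * Ppoly (d - m) m * (Nat.factorial d) *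
            ∑ J ∈ Finset.univ.filter
                (fun J : (l + m).Partition => normJ J = d ∧ ∀ k ∈ J.parts, Odd k),
              Wp p J :=
  component_formula_general p n m hm l
end
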